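/- Let I be the basic PLP-polymatroidal ideal of type (0, b | α, β) in S = K[x₁,…,x_n]. Then (I : 𝔪) ≠ I (equivalently, depth S/I = 0) if and only if all of the following inequalities hold: b_i ≥ 1 for all i = 1,…,n; α_i ≤ β_i − 1 for i = 2,…,n−1; β_i + b_{i+1} + ⋯ + b_j ≥ α_j + j − i + 1 for all 1 ≤ i ≤ j ≤ n−1; and β_i + b_{i+1} + ⋯ + b_n ≥ d + n − i for all 1 ≤ i ≤ n. -/

import Mathlib

open MvPolynomial

namespace PLPaux


open Finset

variable {n : ℕ}

/-- Extend a function on `Fin n` to `ℕ` by zero. -/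
def pad (g : Fin n → ℕ) : ℕ → ℕ := fun j => if h : j < n then g ⟨j, h⟩ else 0

lemma pad_lt (g : Fin n → ℕ) {j : ℕ} (h : j < n) : pad g j = g ⟨j, h⟩ := dif_pos h

lemma pad_fin (g : Fin n → ℕ) (x : Fin n) : pad g x.1 = g x := by
  rw [pad_lt g x.isLt]

lemma sum_iic_nat (g : Fin n → ℕ) (k : Fin n) :
    ∑ l ∈ Iic k, g l = ∑ m ∈ Iic (k : ℕ), pad g m := by
  rw [← Fin.map_valEmbedding_Iic, Finset.sum_map]
  exact Finset.sum_congr rfl fun x _ => by simp [pad_fin]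

lemma sum_ioc_nat (g : Fin n → ℕ) (i k : Fin n) :
    ∑ l ∈ Ioc i k, g l = ∑ m ∈ Ioc (i : ℕ) (k : ℕ), pad g m := by
  rw [← Fin.map_valEmbedding_Ioc, Finset.sum_map]
  exact Finset.sum_congr rfl fun x _ => by simp [pad_fin]

lemma nat_Iic_eq_range (m : ℕ) : Iic m = Finset.range (m + 1) := by
  ext x; simp [Nat.lt_succ_iff]

lemma nat_Iic_split {i j : ℕ} (h : i ≤ j) (f : ℕ → ℕ) :
    ∑ m ∈ Iic j, f m = ∑ m ∈ Iic i, f m + ∑ m ∈ Ioc i j, f m := by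
  rw [← Finset.sum_union]
  · congr 1
    ext x; simp only [Finset.mem_union, Finset.mem_Iic, Finset.mem_Ioc]; omega
  · rw [Finset.disjoint_left]
    intro a ha hb
    simp only [Finset.mem_Iic] at ha
    simp only [Finset.mem_Ioc] at hb
    omega

lemma fin_Iic_split {i j : Fin n} (h : i ≤ j) (g : Fin n → ℕ) :
    ∑ l ∈ Iic j, g l = ∑ l ∈ Iic i, g l + ∑ l ∈ Ioc i j, g l := by
  rw [sum_iic_nat, sum_iic_nat, sum_ioc_nat]
  exact nat_Iic_split h (pad g)

lemma greedy (hn : 0 < n) (A Bd c : Fin n → ℕ) (hBd : Monotone Bd)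
    (H1 : ∀ j, A j ≤ ∑ l ∈ Iic j, c l)
    (H2 : ∀ i j : Fin n, i ≤ j → A j ≤ Bd i + ∑ l ∈ Ioc i j, c l) :
    ∃ u : Fin n → ℕ, (∀ l, u l ≤ c l) ∧
      ∀ k, A k ≤ ∑ l ∈ Iic k, u l ∧ ∑ l ∈ Iic k, u l ≤ Bd k := by
  classical
  let SS : ℕ → ℕ := fun k => Nat.rec 0 (fun k ih => min (pad Bd k) (ih + pad c k)) k
  have hSS0 : SS 0 = 0 := rfl
  have hSSs : ∀ k, SS (k + 1) = min (pad Bd k) (SS k + pad c k) := fun k => rfl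
  have hF0 : ∀ k, k < n → SS k ≤ pad Bd k := by
    intro k hk
    induction k with
    | zero => exact Nat.zero_le _
    | succ k ih =>
      have hk' : k < n := by omega
      calc SS (k + 1) ≤ pad Bd k := by rw [hSSs]; exact min_le_left _ _
        _ ≤ pad Bd (k + 1) := by
          rw [pad_lt Bd hk', pad_lt Bd hk]
          exact hBd (Fin.mk_le_mk.mpr (by omega))
  have hmono : ∀ k, k < n → SS k ≤ SS (k + 1) := by
    intro k hk
    rw [hSSs]; exact le_min (hF0 k hk) (Nat.le_add_right _ _)
  have hcap : ∀ k, SS (k + 1) ≤ SS k + pad c k := fun k => min_le_right _ _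
  set u : Fin n → ℕ := fun l => SS (l.1 + 1) - SS l.1 with hu
  have hpadu : ∀ (m : ℕ) (h : m < n), pad u m = SS (m + 1) - SS m := fun m h => pad_lt u h
  have hsum : ∀ k : Fin n, ∑ l ∈ Iic k, u l = SS (k.1 + 1) := by
    intro k
    rw [sum_iic_nat, nat_Iic_eq_range]
    have : ∀ m, m < n → ∑ j ∈ Finset.range (m + 1), pad u j = SS (m + 1) := by
      intro m hm
      induction m with
      | zero =>
        rw [Finset.sum_range_one, hpadu 0 hm, hSS0, Nat.sub_zero]
      | succ m ih =>
        rw [Finset.sum_range_succ, ih (by omega), hpadu (m + 1) hm]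
        have h1 := hmono (m + 1) hm
        omega
    exact this k.1 k.isLt
  have hL : ∀ k, k < n → ∀ j (hj : j < n), k ≤ j →
      A ⟨j, hj⟩ ≤ SS (k + 1) + ∑ l ∈ Ioc k j, pad c l := by
    intro k hk
    induction k with
    | zero =>
      intro j hj hkj
      rw [hSSs, hSS0, Nat.zero_add]
      rcases min_cases (pad Bd 0) (pad c 0) with ⟨hmin, _⟩ | ⟨hmin, _⟩ <;> rw [hmin]
      · have := H2 ⟨0, hn⟩ ⟨j, hj⟩ (Fin.mk_le_mk.mpr (Nat.zero_le _))
        rw [sum_ioc_nat] at this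
        rwa [pad_lt Bd hn]
      · have := H1 ⟨j, hj⟩
        rw [sum_iic_nat, nat_Iic_split (Nat.zero_le j) (pad c)] at this
        have h0 : ∑ m ∈ Iic 0, pad c m = pad c 0 := by
          rw [nat_Iic_eq_range, Finset.sum_range_one]
        omega
    | succ k ih =>
      intro j hj hkj
      have hk' : k < n := by omega
      rw [hSSs]
      rcases min_cases (pad Bd (k + 1)) (SS (k + 1) + pad c (k + 1)) with ⟨hmin, _⟩ | ⟨hmin, _⟩ <;>
        rw [hmin]
      · have := H2 ⟨k + 1, hk⟩ ⟨j, hj⟩ (Fin.mk_le_mk.mpr hkj)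
        rw [sum_ioc_nat] at this
        rwa [pad_lt Bd hk]
      · have hikj := ih hk' j hj (by omega)
        have hsplit : ∑ l ∈ Ioc k j, pad c l = pad c (k + 1) + ∑ l ∈ Ioc (k + 1) j, pad c l := by
          have : Ioc k j = insert (k + 1) (Ioc (k + 1) j) := by
            ext x
            simp only [Finset.mem_Ioc, Finset.mem_insert]
            omega
          rw [this, Finset.sum_insert (by simp)]
        omega
  refine ⟨u, ?_, ?_⟩
  · intro l
    have h1 := hcap l.1
    have h2 := hmono l.1 l.isLt
    have : u l = SS (l.1 + 1) - SS l.1 := rfl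
    have h3 : pad c l.1 = c l := pad_fin c l
    omega
  · intro k
    constructor
    · rw [hsum k]
      have := hL k.1 k.isLt k.1 k.isLt le_rfl
      simpa using this
    · rw [hsum k]
      have h3 : SS (k.1 + 1) ≤ pad Bd k.1 := by rw [hSSs]; exact min_le_left _ _
      calc SS (k.1+1) ≤ pad Bd k.1 := h3
        _ = Bd k := pad_fin Bd k

section Arith
variable (b α β : Fin n → ℕ)

/-- The generator condition. -/
def Gen (u : Fin n → ℕ) : Prop :=
  (∀ i, u i ≤ b i) ∧ ∀ i, α i ≤ ∑ j ∈ Iic i, u j ∧ ∑ j ∈ Iic i, u j ≤ β i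

lemma le_last (hn : 0 < n) (x : Fin n) : x ≤ (⟨n - 1, Nat.sub_lt hn Nat.one_pos⟩ : Fin n) := by
  rcases x with ⟨x, hx⟩
  exact Fin.mk_le_mk.mpr (by omega)

lemma sum_add_ite (w : Fin n → ℕ) (m k : Fin n) :
    ∑ j ∈ Iic k, (w j + if j = m then 1 else 0)
      = (∑ j ∈ Iic k, w j) + if m ≤ k then 1 else 0 := by
  rw [Finset.sum_add_distrib, Finset.sum_ite_eq' (Iic k) m (fun _ => 1)]
  simp [Finset.mem_Iic]

lemma sum_ioc_card (w g : Fin n → ℕ) (hw : ∀ l, w l + 1 ≤ g l) (i j : Fin n) :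
    ∑ l ∈ Ioc i j, w l + ((j : ℕ) - (i : ℕ)) ≤ ∑ l ∈ Ioc i j, g l := by
  have h1 : ∑ l ∈ Ioc i j, w l + ((j : ℕ) - (i : ℕ)) = ∑ l ∈ Ioc i j, (w l + 1) := by
    rw [Finset.sum_add_distrib, Finset.sum_const, smul_eq_mul, mul_one, Fin.card_Ioc]
  rw [h1]
  exact Finset.sum_le_sum fun l _ => hw l

lemma ioi_eq_ioc (i j : Fin n) (hj : (j : ℕ) = n - 1) : Ioi i = Ioc i j := by
  ext x
  simp only [Finset.mem_Ioi, Finset.mem_Ioc]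
  constructor
  · intro h
    refine ⟨h, ?_⟩
    rw [Fin.le_def, hj]
    have := x.isLt
    omega
  · exact fun h => h.1

set_option maxHeartbeats 2000000 in
theorem arith (hn : 0 < n) (d : ℕ) (hd : 1 ≤ d)
    (hαmono : Monotone α) (hβmono : Monotone β)
    (hαlast : α ⟨n - 1, Nat.sub_lt hn Nat.one_pos⟩ = d) (hβlast : β ⟨n - 1, Nat.sub_lt hn Nat.one_pos⟩ = d)
    (hαβ : ∀ i, α i ≤ β i)
    (hα1 : α ⟨0, hn⟩ = 0) (hβ1 : β ⟨0, hn⟩ = b ⟨0, hn⟩) :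
    (∃ w : Fin n → ℕ, (¬ ∃ u, Gen b α β u ∧ ∀ i, u i ≤ w i) ∧
        ∀ m, ∃ u, Gen b α β u ∧ ∀ i, u i ≤ w i + if i = m then 1 else 0) ↔
      ((∀ i, 1 ≤ b i) ∧
       (∀ i : Fin n, 1 ≤ (i : ℕ) → (i : ℕ) + 1 < n → α i + 1 ≤ β i) ∧
       (∀ i j : Fin n, i ≤ j → (j : ℕ) + 1 < n →
          α j + ((j : ℕ) - (i : ℕ)) + 1 ≤ β i + ∑ l ∈ Finset.Ioc i j, b l) ∧
       (∀ i : Fin n, d + (n - 1 - (i : ℕ)) ≤ β i + ∑ l ∈ Finset.Ioi i, b l)) := by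
  set last : Fin n := ⟨n - 1, Nat.sub_lt hn Nat.one_pos⟩ with hlast
  have hlast_le : ∀ x : Fin n, x ≤ last := le_last hn
  have hzero_le : ∀ x : Fin n, (⟨0, hn⟩ : Fin n) ≤ x := fun x => Fin.mk_le_mk.mpr (Nat.zero_le _)
  constructor
  · rintro ⟨w, hnd, hall⟩
    -- (a) every coordinate of w is below b
    have hwb : ∀ m, w m + 1 ≤ b m := by
      intro m
      by_contra hc
      obtain ⟨u, hGen, hu⟩ := hall m
      refine hnd ⟨u, hGen, fun i => ?_⟩
      rcases eq_or_ne i m with rfl | hne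
      · have := hGen.1 i; have := hu i; simp at this ⊢; omega
      · have := hu i; simpa [hne] using this
    -- facts from the witness at m = last
    have h1 : ∀ k : Fin n, k ≠ last → α k ≤ (∑ l ∈ Iic k, w l) := by
      intro k hk
      obtain ⟨u, hGen, hu⟩ := hall last
      have h2 := (hGen.2 k).1
      have h3 : ∑ j ∈ Iic k, u j ≤ ∑ j ∈ Iic k, (w j + if j = last then 1 else 0) :=
        Finset.sum_le_sum fun j _ => hu j
      rw [sum_add_ite] at h3
      have h4 : ¬ (last ≤ k) := fun h => hk (le_antisymm (hlast_le k) h)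
      rw [if_neg h4] at h3
      omega
    have h2 : ∀ i j : Fin n, i ≤ j → j ≠ last → α j ≤ β i + ∑ l ∈ Ioc i j, w l := by
      intro i j hij hj
      obtain ⟨u, hGen, hu⟩ := hall last
      have ha := (hGen.2 j).1
      have hb' := (hGen.2 i).2
      have hsplit := fin_Iic_split hij u
      have h3 : ∑ l ∈ Ioc i j, u l ≤ ∑ l ∈ Ioc i j, w l := by
        refine Finset.sum_le_sum fun l hl => ?_
        have hlm : l ≠ last := by
          intro h
          rw [Finset.mem_Ioc] at hl
          exact hj (le_antisymm (hlast_le j) (h ▸ hl.2))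
        have := hu l; simpa [hlm] using this
      omega
    have h3 : ∀ i : Fin n, d ≤ β i + ∑ l ∈ Ioc i last, w l := by
      intro i
      obtain ⟨u, hGen, hu⟩ := hall ⟨0, hn⟩
      have ha := (hGen.2 last).1
      have hb' := (hGen.2 last).2
      have hc' := (hGen.2 i).2
      have hsplit := fin_Iic_split (hlast_le i) u
      have h4 : ∑ l ∈ Ioc i last, u l ≤ ∑ l ∈ Ioc i last, w l := by
        refine Finset.sum_le_sum fun l hl => ?_
        have hl0 : l ≠ ⟨0, hn⟩ := by
          rw [Finset.mem_Ioc] at hl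
          intro h
          have := hl.1
          rw [h] at this
          exact absurd (hzero_le i) (not_le_of_gt this)
        have := hu l; simpa [hl0] using this
      rw [hαlast] at ha
      rw [hβlast] at hb'
      omega
    -- (∑ l ∈ Iic last, w l) = d - 1
    have hTlast : (∑ l ∈ Iic last, w l) + 1 = d := by
      have hub : (∑ l ∈ Iic last, w l) + 1 ≥ d := by
        obtain ⟨u, hGen, hu⟩ := hall ⟨0, hn⟩
        have ha := (hGen.2 last).1
        rw [hαlast] at ha
        have h4 : ∑ j ∈ Iic last, u j ≤ ∑ j ∈ Iic last, (w j + if j = ⟨0, hn⟩ then 1 else 0) :=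
          Finset.sum_le_sum fun j _ => hu j
        rw [sum_add_ite, if_pos (hzero_le last)] at h4
        omega
      have hlb : (∑ l ∈ Iic last, w l) ≤ d - 1 := by
        by_contra hc
        have hTd : d ≤ (∑ l ∈ Iic last, w l) := by omega
        -- w itself would admit a generator below it
        obtain ⟨u, hu, hcon⟩ := greedy hn α β w hβmono
          (fun j => by
            rcases eq_or_ne j last with rfl | hj
            · rw [hαlast]; exact hTd
            · exact h1 j hj)
          (fun i j hij => by
            rcases eq_or_ne j last with rfl | hj
            · rw [hαlast]; exact h3 i
            · exact h2 i j hij hj)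
        exact hnd ⟨u, ⟨fun i => (hu i).trans (by have := hwb i; omega),
          fun i => hcon i⟩, hu⟩
      omega
    -- exactness of witnesses
    have hexact : ∀ m : Fin n, ∀ i : Fin n,
        (Classical.choose (hall m)) i = w i + if i = m then 1 else 0 := by
      intro m
      have hspec := Classical.choose_spec (hall m)
      obtain ⟨hGen, hu⟩ := hspec
      set u := Classical.choose (hall m) with hudef
      have ha := (hGen.2 last).1
      have hb' := (hGen.2 last).2
      rw [hαlast] at ha; rw [hβlast] at hb'
      have hsum2 : ∑ j ∈ Iic last, (w j + if j = m then 1 else 0) = d := by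
        rw [sum_add_ite, if_pos (hlast_le m)]
        omega
      have heq : ∑ j ∈ Iic last, u j = ∑ j ∈ Iic last, (w j + if j = m then 1 else 0) := by
        omega
      have := (Finset.sum_eq_sum_iff_of_le (fun i _ => hu i)).mp heq
      intro i
      exact this i (Finset.mem_Iic.mpr (hlast_le i))
    -- upper bound fact
    have hβk : ∀ k : Fin n, (∑ l ∈ Iic k, w l) + 1 ≤ β k := by
      intro k
      have hspec := Classical.choose_spec (hall ⟨0, hn⟩)
      obtain ⟨hGen, hu⟩ := hspec
      have hb' := (hGen.2 k).2
      have hs : ∑ j ∈ Iic k, (Classical.choose (hall ⟨0, hn⟩)) j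
          = ∑ j ∈ Iic k, (w j + if j = ⟨0, hn⟩ then 1 else 0) :=
        Finset.sum_congr rfl fun j _ => hexact ⟨0, hn⟩ j
      rw [hs, sum_add_ite, if_pos (hzero_le k)] at hb'
      omega
    refine ⟨fun i => by have := hwb i; omega, ?_, ?_, ?_⟩
    · intro i hi1 hi2
      have hne : i ≠ last := by
        intro h; rw [h, hlast] at hi2; simp at hi2; omega
      have := h1 i hne
      have := hβk i
      omega
    · intro i j hij hj
      have hne : j ≠ last := by
        intro h; rw [h, hlast] at hj; simp at hj; omega
      have hαj := h1 j hne
      have hsplit := fin_Iic_split hij w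
      have hcard := sum_ioc_card w b hwb i j
      have hβi := hβk i
      have hTj := hsplit
      omega
    · intro i
      rcases eq_or_ne i last with rfl | hne
      · have hlv : ((last : Fin n) : ℕ) = n - 1 := rfl
        have h0 : n - 1 - ((last : Fin n) : ℕ) = 0 := by omega
        rw [h0, hβlast]
        omega
      · have hsplit := fin_Iic_split (hlast_le i) w
        have hcard := sum_ioc_card w b hwb i last
        have hβi := hβk i
        rw [ioi_eq_ioc i last rfl]
        have hlv : ((last : Fin n) : ℕ) = n - 1 := rfl
        omega
  · rintro ⟨C1, C2, C3, C4⟩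
    have hβpos : ∀ i, 1 ≤ β i := by
      intro i
      have := hβmono (hzero_le i)
      have := C1 ⟨0, hn⟩
      omega
    have hβd : ∀ i, β i ≤ d := fun i => hβlast ▸ hβmono (hlast_le i)
    -- helper sum identities
    have hsum_sub_iic : ∀ j : Fin n, ∑ l ∈ Iic j, (b l - 1) + ((j : ℕ) + 1) = ∑ l ∈ Iic j, b l := by
      intro j
      have h1 : ∑ l ∈ Iic j, (b l - 1) + ((j:ℕ)+1) = ∑ l ∈ Iic j, ((b l - 1) + 1) := by
        rw [Finset.sum_add_distrib, Finset.sum_const, smul_eq_mul, mul_one, Fin.card_Iic]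
      rw [h1]
      exact Finset.sum_congr rfl fun l _ => by have := C1 l; omega
    have hsum_sub_ioc : ∀ i j : Fin n, ∑ l ∈ Ioc i j, (b l - 1) + ((j:ℕ) - (i:ℕ)) = ∑ l ∈ Ioc i j, b l := by
      intro i j
      have h1 : ∑ l ∈ Ioc i j, (b l - 1) + ((j:ℕ) - (i:ℕ)) = ∑ l ∈ Ioc i j, ((b l - 1) + 1) := by
        rw [Finset.sum_add_distrib, Finset.sum_const, smul_eq_mul, mul_one, Fin.card_Ioc]
      rw [h1]
      exact Finset.sum_congr rfl fun l _ => by have := C1 l; omega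
    have hiic0 : ∀ g : Fin n → ℕ, ∑ l ∈ Iic (⟨0, hn⟩ : Fin n), g l = g ⟨0, hn⟩ := by
      intro g
      have : Iic (⟨0, hn⟩ : Fin n) = {⟨0, hn⟩} := by
        ext x
        simp only [Finset.mem_Iic, Finset.mem_singleton]
        constructor
        · intro h; exact le_antisymm h (hzero_le x)
        · intro h; rw [h]
      rw [this, Finset.sum_singleton]
    -- apply greedy
    obtain ⟨w, hwc, hwcon⟩ := greedy hn
      (fun k => if k = last then d - 1 else α k)
      (fun k => if k = last then d - 1 else β k - 1)
      (fun l => b l - 1)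
      (by
        intro i j hij
        dsimp only
        by_cases hj : j = last
        · subst hj
          rw [if_pos rfl]
          by_cases hi : i = last
          · subst hi; rw [if_pos rfl]
          · rw [if_neg hi]
            have := hβd i
            omega
        · have hi : i ≠ last := fun h => hj (le_antisymm (hlast_le j) (h ▸ hij))
          rw [if_neg hi, if_neg hj]
          have := hβmono hij
          omega)
      (by
        intro j
        by_cases hj : j = last
        · subst hj
          rw [if_pos rfl]
          have hc4 := C4 ⟨0, hn⟩
          rw [ioi_eq_ioc ⟨0, hn⟩ last rfl] at hc4
          have hsplit := fin_Iic_split (hlast_le ⟨0, hn⟩) b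
          rw [hiic0 b] at hsplit
          have hiicsub := hsum_sub_iic last
          rw [hβ1] at hc4
          have hlastval : ((last : Fin n) : ℕ) = n - 1 := rfl
          have h0v : ((⟨0, hn⟩ : Fin n) : ℕ) = 0 := rfl
          omega
        · rw [if_neg hj]
          have hjlt : (j : ℕ) + 1 < n := by
            have := j.isLt
            have : (j:ℕ) ≠ n - 1 := fun h => hj (by rw [hlast]; exact Fin.ext h)
            omega
          have hc3 := C3 ⟨0, hn⟩ j (hzero_le j) hjlt
          have hsplit := fin_Iic_split (hzero_le j) b
          rw [hiic0 b] at hsplit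
          have hiicsub := hsum_sub_iic j
          rw [hβ1] at hc3
          have h0v : ((⟨0, hn⟩ : Fin n) : ℕ) = 0 := rfl
          omega)
      (by
        intro i j hij
        by_cases hj : j = last
        · subst hj
          rw [if_pos rfl]
          by_cases hi : i = last
          · subst hi
            rw [if_pos rfl]
            simp
          · rw [if_neg hi]
            have hc4 := C4 i
            rw [ioi_eq_ioc i last rfl] at hc4
            have hsub := hsum_sub_ioc i last
            have := hβpos i
            have hlastval : ((last : Fin n) : ℕ) = n - 1 := rfl
            omega
        · have hi : i ≠ last := fun h => hj (le_antisymm (hlast_le j) (h ▸ hij))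
          rw [if_neg hi, if_neg hj]
          have hjlt : (j : ℕ) + 1 < n := by
            have := j.isLt
            have : (j:ℕ) ≠ n - 1 := fun h => hj (by rw [hlast]; exact Fin.ext h)
            omega
          have hc3 := C3 i j hij hjlt
          have hsub := hsum_sub_ioc i j
          have := hβpos i
          omega)
    have hTlast : (∑ l ∈ Iic last, w l) + 1 = d := by
      have h1 := (hwcon last).1
      have h2 := (hwcon last).2
      rw [if_pos rfl] at h1 h2
      omega
    refine ⟨w, fun ⟨u, hGen, hu⟩ => ?_, fun m => ?_⟩
    · have ha := (hGen.2 last).1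
      rw [hαlast] at ha
      have h4 : ∑ j ∈ Iic last, u j ≤ ∑ j ∈ Iic last, w j :=
        Finset.sum_le_sum fun j _ => hu j
      omega
    · refine ⟨fun i => w i + if i = m then 1 else 0, ⟨?_, ?_⟩, fun i => le_rfl⟩
      · intro i
        dsimp only
        have := hwc i
        have := C1 i
        rcases eq_or_ne i m with rfl | hne
        · rw [if_pos rfl]; omega
        · rw [if_neg hne]; omega
      · intro k
        dsimp only
        rw [sum_add_ite]
        by_cases hk : k = last
        · subst hk
          rw [if_pos (hlast_le m), hαlast, hβlast]
          omega
        · have h1 := (hwcon k).1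
          have h2 := (hwcon k).2
          rw [if_neg hk] at h1 h2
          have := hβpos k
          constructor
          · exact h1.trans (by omega)
          · by_cases hm : m ≤ k
            · rw [if_pos hm]; omega
            · rw [if_neg hm]; omega

end Arith


lemma prodX_eq {K : Type*} [CommSemiring K] (u : Fin n → ℕ) :
    (∏ i, X i ^ u i : MvPolynomial (Fin n) K)
      = monomial (Finsupp.equivFunOnFinite.symm u) 1 := by
  have hcoe : ⇑(Finsupp.equivFunOnFinite.symm u) = u := rfl
  have h2 : (∏ i, X i ^ u i : MvPolynomial (Fin n) K)
      = ∏ i, X i ^ (Finsupp.equivFunOnFinite.symm u) i :=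
    Finset.prod_congr rfl fun i _ => by rw [hcoe]
  rw [h2, ← prod_X_pow_eq_monomial]
  exact (Finset.prod_subset (Finset.subset_univ _) fun x _ hx => by
    rw [Finsupp.notMem_support_iff.mp hx, pow_zero]).symm

lemma mem_span_iff {K : Type*} [Field K] (Q : (Fin n → ℕ) → Prop)
    (f : MvPolynomial (Fin n) K) :
    f ∈ Ideal.span {g : MvPolynomial (Fin n) K | ∃ u, Q u ∧ g = ∏ i, X i ^ u i} ↔
      ∀ w ∈ f.support, ∃ u, Q u ∧ ∀ i, u i ≤ w i := by
  classical
  constructor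
  · intro hf
    let J : Ideal (MvPolynomial (Fin n) K) :=
      { carrier := {g | ∀ w ∈ g.support, ∃ u, Q u ∧ ∀ i, u i ≤ w i}
        zero_mem' := by intro w hw; simp at hw
        add_mem' := by
          intro p q hp hq w hw
          rcases Finset.mem_union.mp (MvPolynomial.support_add hw) with h | h
          · exact hp w h
          · exact hq w h
        smul_mem' := by
          intro c g hg w hw
          rw [smul_eq_mul] at hw
          obtain ⟨y, hy, z, hz, rfl⟩ := Finset.mem_add.mp (MvPolynomial.support_mul c g hw)
          obtain ⟨u, hQ, hu⟩ := hg z hz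
          exact ⟨u, hQ, fun i => (hu i).trans (by simp [Finsupp.add_apply])⟩ }
    have hle : Ideal.span {g : MvPolynomial (Fin n) K | ∃ u, Q u ∧ g = ∏ i, X i ^ u i} ≤ J := by
      rw [Ideal.span_le]
      rintro g ⟨u, hQ, rfl⟩
      intro w hw
      rw [prodX_eq, MvPolynomial.support_monomial] at hw
      rw [if_neg (one_ne_zero : (1:K) ≠ 0)] at hw
      rcases Finset.mem_singleton.mp hw with rfl
      exact ⟨u, hQ, fun i => le_rfl⟩
    exact hle hf
  · intro h
    have hrw : f = ∑ v ∈ f.support, monomial v (coeff v f) := MvPolynomial.as_sum f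
    rw [hrw]
    refine Submodule.sum_mem _ fun w hw => ?_
    obtain ⟨u, hQ, hu⟩ := h w hw
    have hle : Finsupp.equivFunOnFinite.symm u ≤ w := by
      rw [Finsupp.le_def]; intro i; exact hu i
    have hmon : monomial w (coeff w f)
        = (∏ i, X i ^ u i) * monomial (w - Finsupp.equivFunOnFinite.symm u) (coeff w f) := by
      rw [prodX_eq, monomial_mul, one_mul, add_tsub_cancel_of_le hle]
    rw [hmon]
    exact Ideal.mul_mem_right _ _ (Ideal.subset_span ⟨u, hQ, rfl⟩)

lemma key {K : Type*} [Field K] (Q : (Fin n → ℕ) → Prop) :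
    (Ideal.span {g : MvPolynomial (Fin n) K | ∃ u, Q u ∧ g = ∏ i, X i ^ u i}).colon
        ((Ideal.span (Set.range X) : Ideal (MvPolynomial (Fin n) K)) : Set (MvPolynomial (Fin n) K)) ≠
      Ideal.span {g : MvPolynomial (Fin n) K | ∃ u, Q u ∧ g = ∏ i, X i ^ u i} ↔
    ∃ w : Fin n → ℕ, (¬ ∃ u, Q u ∧ ∀ i, u i ≤ w i) ∧
      ∀ m, ∃ u, Q u ∧ ∀ i, u i ≤ w i + if i = m then 1 else 0 := by
  classical
  set I : Ideal (MvPolynomial (Fin n) K) :=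
    Ideal.span {g : MvPolynomial (Fin n) K | ∃ u, Q u ∧ g = ∏ i, X i ^ u i} with hIdef
  have hIle : I ≤ I.colon ((Ideal.span (Set.range X) : Ideal (MvPolynomial (Fin n) K)) : Set (MvPolynomial (Fin n) K)) := by
    intro f hf
    rw [Submodule.mem_colon]
    intro p hp
    rw [smul_eq_mul]
    exact Ideal.mul_mem_right _ _ hf
  constructor
  · intro hne
    have hex : ∃ f, f ∈ I.colon ((Ideal.span (Set.range X) : Ideal (MvPolynomial (Fin n) K)) : Set (MvPolynomial (Fin n) K)) ∧ f ∉ I := by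
      by_contra hc
      push_neg at hc
      exact hne (le_antisymm (fun f hf => hc f hf) hIle)
    obtain ⟨f, hfc, hfI⟩ := hex
    rw [mem_span_iff] at hfI
    have h1 : ∃ w ∈ f.support, ¬ ∃ u, Q u ∧ ∀ i, u i ≤ w i := by
      by_contra hc
      push_neg at hc
      exact hfI fun w hw => hc w hw
    obtain ⟨w, hwsup, hwnd⟩ := h1
    refine ⟨fun i => w i, fun hcon => hwnd hcon, fun m => ?_⟩
    have hXm : (X m : MvPolynomial (Fin n) K) ∈ Ideal.span (Set.range X) :=
      Ideal.subset_span ⟨m, rfl⟩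
    have hmul : f * X m ∈ I := by
      have := Submodule.mem_colon.mp hfc (X m) hXm
      rwa [smul_eq_mul] at this
    have hsup : w + Finsupp.single m 1 ∈ (f * X m).support := by
      rw [MvPolynomial.mem_support_iff, MvPolynomial.coeff_mul_X]
      exact MvPolynomial.mem_support_iff.mp hwsup
    obtain ⟨u, hQ, hu⟩ := (mem_span_iff Q _).mp hmul _ hsup
    refine ⟨u, hQ, fun i => ?_⟩
    have h2 := hu i
    rw [Finsupp.add_apply, Finsupp.single_apply] at h2
    rcases eq_or_ne i m with rfl | hne'
    · rw [if_pos rfl]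
      rwa [if_pos rfl] at h2
    · rw [if_neg hne']
      rwa [if_neg (Ne.symm hne')] at h2
  · rintro ⟨w, hnd, hall⟩
    set s : Fin n →₀ ℕ := Finsupp.equivFunOnFinite.symm w with hsdef
    have hs : ∀ i, s i = w i := fun i => rfl
    have hfI : (monomial s 1 : MvPolynomial (Fin n) K) ∉ I := by
      intro hmem
      obtain ⟨u, hQ, hu⟩ := (mem_span_iff Q _).mp hmem s (by
        rw [MvPolynomial.support_monomial, if_neg (one_ne_zero : (1:K) ≠ 0)]
        exact Finset.mem_singleton_self s)
      exact hnd ⟨u, hQ, fun i => (hu i).trans_eq (hs i)⟩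
    have hcolon : (monomial s 1 : MvPolynomial (Fin n) K) ∈ I.colon ((Ideal.span (Set.range X) : Ideal (MvPolynomial (Fin n) K)) : Set (MvPolynomial (Fin n) K)) := by
      rw [Submodule.mem_colon]
      intro p hp
      rw [smul_eq_mul]
      induction hp using Submodule.span_induction with
      | mem x hx =>
        obtain ⟨m, rfl⟩ := hx
        have hXm : (X m : MvPolynomial (Fin n) K) = monomial (Finsupp.single m 1) 1 := rfl
        have hmm : (monomial s 1 : MvPolynomial (Fin n) K) * X m
            = monomial (s + Finsupp.single m 1) 1 := by
          rw [hXm, monomial_mul, one_mul]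
        rw [hmm, mem_span_iff]
        intro v hv
        rw [MvPolynomial.support_monomial, if_neg (one_ne_zero : (1:K) ≠ 0)] at hv
        rcases Finset.mem_singleton.mp hv with rfl
        obtain ⟨u, hQ, hu⟩ := hall m
        refine ⟨u, hQ, fun i => ?_⟩
        have h2 := hu i
        rw [Finsupp.add_apply, Finsupp.single_apply, hs]
        rcases eq_or_ne i m with rfl | hne'
        · rw [if_pos rfl]
          rwa [if_pos rfl] at h2
        · rw [if_neg (Ne.symm hne')]
          rwa [if_neg hne'] at h2
      | zero => rw [mul_zero]; exact zero_mem I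
      | add x y hx hy hx' hy' => rw [mul_add]; exact add_mem hx' hy'
      | smul a x hx hx' =>
        rw [smul_eq_mul, ← mul_assoc, mul_comm (monomial s 1 : MvPolynomial (Fin n) K) a,
          mul_assoc]
        exact Ideal.mul_mem_left _ _ hx'
    intro heq
    rw [heq] at hcolon
    exact hfI hcolon


end PLPaux

/-- For a basic PLP-polymatroidal ideal `I` of type `(0, b | α, β)`,
`depth S/I = 0` (i.e. `(I : 𝔪) ≠ I`) if and only if `bᵢ ≥ 1` for all `i`,
`αᵢ ≤ βᵢ - 1` for `i = 2,…,n-1`, `βᵢ + b_{i+1} + ⋯ + b_j ≥ α_j + j - i + 1` for all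
`1 ≤ i ≤ j ≤ n-1`, and `βᵢ + b_{i+1} + ⋯ + bₙ ≥ d + n - i` for all `1 ≤ i ≤ n`.
(Indices here are 1-based in the paper; below `Fin n` is 0-based.) -/
theorem depth_zero_of_PLP_iff
    {K : Type*} [Field K] {n : ℕ} (hn : 0 < n) (d : ℕ) (hd : 1 ≤ d)
    (b α β : Fin n → ℕ)
    (hαmono : Monotone α) (hβmono : Monotone β)
    (hαlast : α ⟨n - 1, by omega⟩ = d) (hβlast : β ⟨n - 1, by omega⟩ = d)
    (hαβ : ∀ i, α i ≤ β i)
    (hα1 : α ⟨0, hn⟩ = 0) (hβ1 : β ⟨0, hn⟩ = b ⟨0, hn⟩)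
    (I : Ideal (MvPolynomial (Fin n) K))
    (hI : I = Ideal.span {f | ∃ u : Fin n → ℕ, (∀ i, u i ≤ b i) ∧
        (∀ i, α i ≤ ∑ j ∈ Finset.Iic i, u j ∧ ∑ j ∈ Finset.Iic i, u j ≤ β i) ∧
        f = ∏ i, X i ^ u i})
    (mI : Ideal (MvPolynomial (Fin n) K)) (hmI : mI = Ideal.span (Set.range X)) :
    I.colon mI ≠ I ↔
      ((∀ i, 1 ≤ b i) ∧
       (∀ i : Fin n, 1 ≤ (i : ℕ) → (i : ℕ) + 1 < n → α i + 1 ≤ β i) ∧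
       (∀ i j : Fin n, i ≤ j → (j : ℕ) + 1 < n →
          α j + ((j : ℕ) - (i : ℕ)) + 1 ≤ β i + ∑ l ∈ Finset.Ioc i j, b l) ∧
       (∀ i : Fin n, d + (n - 1 - (i : ℕ)) ≤ β i + ∑ l ∈ Finset.Ioi i, b l)) := by
  subst hI hmI
  have hset : {f : MvPolynomial (Fin n) K | ∃ u : Fin n → ℕ, (∀ i, u i ≤ b i) ∧
      (∀ i, α i ≤ ∑ j ∈ Finset.Iic i, u j ∧ ∑ j ∈ Finset.Iic i, u j ≤ β i) ∧
      f = ∏ i, X i ^ u i}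
      = {f : MvPolynomial (Fin n) K | ∃ u : Fin n → ℕ, PLPaux.Gen b α β u ∧ f = ∏ i, X i ^ u i} := by
    ext g
    constructor
    · rintro ⟨u, h1, h2, h3⟩; exact ⟨u, ⟨h1, h2⟩, h3⟩
    · rintro ⟨u, ⟨h1, h2⟩, h3⟩; exact ⟨u, h1, h2, h3⟩
  rw [hset, PLPaux.key (PLPaux.Gen b α β),
    PLPaux.arith b α β hn d hd hαmono hβmono hαlast hβlast hαβ hα1 hβ1]
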